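/- Let N ≥ 1 and let A be an L^{(r)}_{ℓ₁,…,ℓ_r}-free set of integers, and set A_j = A ∩ ((j−1)N, jN] for j = 1,…,N. Then Σ_{j ≤ N} |A_j|^{ℓ₁⋯ℓ_{r−1}} ≤ C · N^{ℓ₁⋯ℓ_{r−1} − 1} for a constant C depending only on r, ℓ₁,…,ℓ_r. -/

import Mathlib

/-!
Induction on `r`, peeling off `ℓ₁`. An `ℓ₁`-subset `T` of a block `A_j` is determined by its
minimum `x` and its pattern `B = T - x`, a subset of `[0, N)` containing `0`; there are at most
`N ^ (ℓ₁ - 1)` patterns, and `x` lies in `A_B = {x | B + x ⊆ A}`, which is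
`L^{(r-1)}_{ℓ₂,…,ℓ_r}`-free. So `(|A_j| choose ℓ₁) ≤ ∑_B |A_B ∩ ((j-1)N, jN]|`. Raising this to the
power `Q = ℓ₂⋯ℓ_{r-1}`, the power mean inequality over the patterns and the induction hypothesis
for each `A_B` bound `∑_j |A_j| ^ (ℓ₁ Q)` by `N ^ ((ℓ₁ - 1) Q) · N ^ (Q - 1)`, up to a constant.
For `r = 1` the set `A` has fewer than `ℓ₁` elements and the blocks are disjoint.
-/

open Pointwise

/-- `A ⊆ G` is `L^{(r)}_{ℓ₁,…,ℓ_r}`-free. -/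
def LFree {G : Type*} [AddCommGroup G] [DecidableEq G] (r : ℕ) (ℓ : Fin r → ℕ)
    (A : Set G) : Prop :=
  ∀ L : Fin r → Finset G, (∀ i, (L i).card = ℓ i) → ¬ ((↑(∑ i, L i) : Set G) ⊆ A)

open Finset
open scoped Function

section LFree

variable {G : Type*} [AddCommGroup G] [DecidableEq G]

def shiftsInto (B : Finset G) (A : Set G) : Set G := {x | ∀ b ∈ B, b + x ∈ A}

lemma LFree.shiftsInto {r : ℕ} {ℓ : Fin (r + 1) → ℕ} {A : Set G} (hA : LFree (r + 1) ℓ A)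
    {B : Finset G} (hB : #B = ℓ 0) : LFree r (Fin.tail ℓ) (shiftsInto B A) := by
  intro L hL hLA
  refine hA (Fin.cons B L) (Fin.cases hB hL) ?_
  rw [Fin.sum_univ_succ, Fin.cons_zero]
  simp only [Fin.cons_succ, coe_add]
  rintro _ ⟨b, hb, x, hx, rfl⟩
  exact hLA hx b hb

lemma LFree.card_lt {ℓ : Fin 1 → ℕ} {A : Set G} (hA : LFree 1 ℓ A) {S : Finset G}
    (hSA : ↑S ⊆ A) : #S < ℓ 0 := by
  by_contra! hS
  obtain ⟨T, hTS, hT⟩ := exists_subset_card_eq hS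
  exact hA (fun _ => T) (fun i => by rwa [Fin.fin_one_eq_zero i])
    (by simpa using (coe_subset.2 hTS).trans hSA)

end LFree

def block (A : Set ℤ) (N j : ℕ) : Set ℤ := A ∩ Set.Ioc (((j : ℤ) - 1) * N) ((j : ℤ) * N)

lemma block_finite (A : Set ℤ) (N j : ℕ) : (block A N j).Finite :=
  (Set.finite_Ioc _ _).inter_of_right A

lemma sub_lt_of_mem_block {A : Set ℤ} {N j : ℕ} {x y : ℤ} (hx : x ∈ block A N j)
    (hy : y ∈ block A N j) : x - y < N := by
  obtain ⟨-, -, hx⟩ := hx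
  obtain ⟨-, hy, -⟩ := hy
  linarith

lemma pairwise_disjoint_block (A : Set ℤ) (N : ℕ) : Pairwise (Disjoint on block A N) := by
  intro j k hjk
  rw [Function.onFun, Set.disjoint_left]
  rintro x ⟨-, hxj, hxj'⟩ ⟨-, hxk, hxk'⟩
  rcases lt_or_gt_of_ne hjk with h | h
  · have : (j : ℤ) + 1 ≤ k := by exact_mod_cast h
    nlinarith
  · have : (k : ℤ) + 1 ≤ j := by exact_mod_cast h
    nlinarith

lemma sum_ncard_block_lt {ℓ : Fin 1 → ℕ} {A : Set ℤ} (hA : LFree 1 ℓ A) (N : ℕ) :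
    ∑ j ∈ Icc 1 N, (block A N j).ncard < ℓ 0 := by
  calc ∑ j ∈ Icc 1 N, (block A N j).ncard
      = ∑ j ∈ Icc 1 N, #(block_finite A N j).toFinset :=
        sum_congr rfl fun j _ => Set.ncard_eq_toFinset_card _ _
    _ = #((Icc 1 N).biUnion fun j => (block_finite A N j).toFinset) :=
        (card_biUnion fun _ _ _ _ hjk =>
          Set.Finite.disjoint_toFinset.2 (pairwise_disjoint_block A N hjk)).symm
    _ < ℓ 0 := hA.card_lt fun x hx => by
        simp only [coe_biUnion, Set.Finite.coe_toFinset, Set.mem_iUnion] at hx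
        obtain ⟨j, -, hxA, -⟩ := hx
        exact hxA

noncomputable def patterns (N ℓ : ℕ) : Finset (Finset ℤ) :=
  {B ∈ (Ico 0 (N : ℤ)).powersetCard ℓ | 0 ∈ B}

lemma card_patterns_le (N ℓ : ℕ) : #(patterns N ℓ) ≤ N ^ (ℓ - 1) := by
  calc #(patterns N ℓ) ≤ #((Ico 0 (N : ℤ)).powersetCard (ℓ - 1)) := by
        refine card_le_card_of_surjOn (insert 0) fun B hB => ?_
        simp only [patterns, coe_filter, mem_powersetCard, Set.mem_ofPred_eq] at hB
        obtain ⟨⟨hBN, hBℓ⟩, hB0⟩ := hB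
        refine ⟨B.erase 0, ?_, insert_erase hB0⟩
        simpa [card_erase_of_mem hB0, hBℓ] using (erase_subset 0 B).trans hBN
    _ = N.choose (ℓ - 1) := by simp
    _ ≤ N ^ (ℓ - 1) := Nat.choose_le_pow _ _

lemma card_powersetCard_le_sum_patterns {N ℓ : ℕ} (hℓ : 0 < ℓ) (F : Finset ℤ)
    (hF : ∀ x ∈ F, ∀ y ∈ F, x - y < N) :
    #(F.powersetCard ℓ) ≤ ∑ B ∈ patterns N ℓ, #{x ∈ F | ∀ b ∈ B, b + x ∈ F} := by
  rw [← card_sigma]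
  refine card_le_card_of_surjOn (fun p => p.1.image (· + p.2)) fun T hT => ?_
  rw [mem_coe, mem_powersetCard] at hT
  obtain ⟨hTF, hTℓ⟩ := hT
  have hne : T.Nonempty := card_pos.1 (hTℓ ▸ hℓ)
  set m := T.min' hne
  refine ⟨⟨T.image (· - m), m⟩, ?_, by simp [image_image, Function.comp_def]⟩
  simp only [coe_sigma, Set.mem_sigma_iff, mem_coe, patterns, mem_filter, mem_powersetCard,
    forall_mem_image, sub_add_cancel]
  refine ⟨⟨⟨fun b hb => ?_, ?_⟩, ?_⟩, hTF (T.min'_mem hne), fun t ht => hTF ht⟩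
  · obtain ⟨t, ht, rfl⟩ := mem_image.1 hb
    simp only [mem_Ico, sub_nonneg]
    exact ⟨T.min'_le t ht, hF t (hTF ht) m (hTF (T.min'_mem hne))⟩
  · rw [card_image_of_injective _ sub_left_injective, hTℓ]
  · exact mem_image.2 ⟨m, T.min'_mem hne, sub_self m⟩

lemma choose_ncard_block_le_sum {ℓ : ℕ} (hℓ : 0 < ℓ) (A : Set ℤ) (N j : ℕ) :
    (block A N j).ncard.choose ℓ ≤ ∑ B ∈ patterns N ℓ, (block (shiftsInto B A) N j).ncard := by
  set F := (block_finite A N j).toFinset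
  calc (block A N j).ncard.choose ℓ = #(F.powersetCard ℓ) := by
        rw [card_powersetCard, Set.ncard_eq_toFinset_card _ (block_finite A N j)]
    _ ≤ ∑ B ∈ patterns N ℓ, #{x ∈ F | ∀ b ∈ B, b + x ∈ F} :=
        card_powersetCard_le_sum_patterns hℓ F fun x hx y hy =>
          sub_lt_of_mem_block ((Set.Finite.mem_toFinset _).1 hx) ((Set.Finite.mem_toFinset _).1 hy)
    _ ≤ ∑ B ∈ patterns N ℓ, (block (shiftsInto B A) N j).ncard := by
        refine sum_le_sum fun B _ => ?_
        rw [← Set.ncard_coe_finset]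
        refine Set.ncard_le_ncard (fun x hx => ?_) (block_finite _ N j)
        simp only [coe_filter, F, Set.Finite.mem_toFinset, Set.mem_ofPred_eq] at hx
        exact ⟨fun b hb => (hx.2 b hb).1, hx.1.2⟩

lemma Nat.pow_le_two_mul_pow_mul_choose_add_one (s k : ℕ) :
    s ^ k ≤ (2 * k) ^ k * (s.choose k + 1) := by
  calc s ^ k ≤ ((s + 1 - k) + k) ^ k := Nat.pow_le_pow_left (by omega) k
    _ ≤ 2 ^ (k - 1) * ((s + 1 - k) ^ k + k ^ k) := add_pow_le (Nat.zero_le _) (Nat.zero_le _) k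
    _ ≤ 2 ^ k * (k.factorial * s.choose k + k ^ k) := by
        gcongr
        · exact one_le_two
        · exact Nat.sub_le k 1
        · exact (Nat.pow_sub_le_descFactorial s k).trans_eq
            (Nat.descFactorial_eq_factorial_mul_choose s k)
    _ ≤ 2 ^ k * (k ^ k * s.choose k + k ^ k) := by gcongr; exact Nat.factorial_le_pow k
    _ = (2 * k) ^ k * (s.choose k + 1) := by ring

lemma Nat.pow_mul_le_of_choose_le_sum {ι : Type*} {s k Q : ℕ} (hQ : 0 < Q) {P : Finset ι}
    {g : ι → ℕ} (hs : s.choose k ≤ ∑ i ∈ P, g i) :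
    s ^ (k * Q) ≤ (2 * k) ^ (k * Q) * 2 ^ (Q - 1) * (#P ^ (Q - 1) * ∑ i ∈ P, g i ^ Q + 1) := by
  have hpow : (∑ i ∈ P, g i) ^ Q ≤ #P ^ (Q - 1) * ∑ i ∈ P, g i ^ Q := by
    obtain ⟨n, rfl⟩ := Nat.exists_eq_add_of_lt hQ
    simpa using pow_sum_le_card_mul_sum_pow (fun i _ => Nat.zero_le (g i)) n
  calc s ^ (k * Q) = (s ^ k) ^ Q := pow_mul s k Q
    _ ≤ ((2 * k) ^ k * (∑ i ∈ P, g i + 1)) ^ Q := by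
        gcongr
        exact (Nat.pow_le_two_mul_pow_mul_choose_add_one s k).trans (by gcongr)
    _ ≤ (2 * k) ^ (k * Q) * (2 ^ (Q - 1) * ((∑ i ∈ P, g i) ^ Q + 1 ^ Q)) := by
        rw [mul_pow, ← pow_mul]
        gcongr
        exact add_pow_le (Nat.zero_le _) (Nat.zero_le _) Q
    _ ≤ (2 * k) ^ (k * Q) * 2 ^ (Q - 1) * (#P ^ (Q - 1) * ∑ i ∈ P, g i ^ Q + 1) := by
        rw [one_pow, ← mul_assoc]
        gcongr

lemma sum_ncard_block_pow_mul_le {r : ℕ} {ℓ : Fin (r + 1) → ℕ} {N Q C : ℕ} (hℓ : 2 ≤ ℓ 0)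
    (hQ : 0 < Q)
    (ih : ∀ A : Set ℤ, LFree r (Fin.tail ℓ) A →
      ∑ j ∈ Icc 1 N, (block A N j).ncard ^ Q ≤ C * N ^ (Q - 1))
    {A : Set ℤ} (hA : LFree (r + 1) ℓ A) :
    ∑ j ∈ Icc 1 N, (block A N j).ncard ^ (ℓ 0 * Q) ≤
      (2 * ℓ 0) ^ (ℓ 0 * Q) * 2 ^ (Q - 1) * (C + 1) * N ^ (ℓ 0 * Q - 1) := by
  set P := patterns N (ℓ 0)
  set K := (2 * ℓ 0) ^ (ℓ 0 * Q) * 2 ^ (Q - 1)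
  have hpattern :
      ∀ B ∈ P, ∑ j ∈ Icc 1 N, (block (shiftsInto B A) N j).ncard ^ Q ≤ C * N ^ (Q - 1) :=
    fun B hB => ih _ (hA.shiftsInto (mem_powersetCard.1 (mem_filter.1 hB).1).2)
  calc ∑ j ∈ Icc 1 N, (block A N j).ncard ^ (ℓ 0 * Q)
      ≤ ∑ j ∈ Icc 1 N, K * (#P ^ (Q - 1) * ∑ B ∈ P, (block (shiftsInto B A) N j).ncard ^ Q + 1) :=
        sum_le_sum fun j _ =>
          Nat.pow_mul_le_of_choose_le_sum hQ (choose_ncard_block_le_sum (by omega) A N j)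
    _ = K * (#P ^ (Q - 1) * ∑ B ∈ P, ∑ j ∈ Icc 1 N, (block (shiftsInto B A) N j).ncard ^ Q
          + N) := by
        rw [← mul_sum, sum_add_distrib, ← mul_sum, sum_comm]
        simp
    _ ≤ K * (#P ^ (Q - 1) * (#P * (C * N ^ (Q - 1))) + N ^ (ℓ 0 * Q - 1)) := by
        gcongr
        · exact sum_le_card_nsmul _ _ _ hpattern
        · exact Nat.le_self_pow (by have := Nat.mul_le_mul hℓ hQ; omega) N
    _ = K * (#P ^ Q * C * N ^ (Q - 1) + N ^ (ℓ 0 * Q - 1)) := by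
        rw [← mul_assoc, ← mul_assoc, ← pow_succ, Nat.sub_add_cancel hQ]
    _ ≤ K * ((N ^ (ℓ 0 - 1)) ^ Q * C * N ^ (Q - 1) + N ^ (ℓ 0 * Q - 1)) := by
        gcongr
        exact card_patterns_le N (ℓ 0)
    _ = K * (C + 1) * N ^ (ℓ 0 * Q - 1) := by
        have hexp : (ℓ 0 - 1) * Q + (Q - 1) = ℓ 0 * Q - 1 := by
          have := Nat.mul_le_mul_right Q (one_le_two.trans hℓ)
          rw [Nat.sub_one_mul]
          omega
        have hN : N ^ ((ℓ 0 - 1) * Q) * C * N ^ (Q - 1) = C * N ^ (ℓ 0 * Q - 1) := by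
          rw [← hexp, pow_add]
          ring
        rw [← pow_mul, hN]
        ring

theorem exists_sum_ncard_block_pow_le (r : ℕ) (ℓ : Fin (r + 1) → ℕ) (hℓ : ∀ i, 2 ≤ ℓ i) :
    ∃ C : ℕ, ∀ N : ℕ, ∀ A : Set ℤ, LFree (r + 1) ℓ A →
      ∑ j ∈ Icc 1 N, (block A N j).ncard ^ (∏ i : Fin r, ℓ i.castSucc) ≤
        C * N ^ ((∏ i : Fin r, ℓ i.castSucc) - 1) := by
  induction r with
  | zero => exact ⟨ℓ 0, fun N A hA => by simpa using (sum_ncard_block_lt hA N).le⟩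
  | succ r ih =>
    obtain ⟨C, hC⟩ := ih (Fin.tail ℓ) fun i => hℓ i.succ
    have hprod : ∏ i : Fin (r + 1), ℓ i.castSucc = ℓ 0 * ∏ i : Fin r, Fin.tail ℓ i.castSucc := by
      simp [Fin.prod_univ_succ, Fin.tail]
    refine ⟨_, fun N A hA => hprod ▸ sum_ncard_block_pow_mul_le (hℓ 0)
      (prod_pos fun i _ => (hℓ _).trans_lt' two_pos) (hC N) hA⟩

theorem stmt17_general (m : ℕ) (ℓ : Fin (m + 2) → ℕ) (hℓ : ∀ i, 2 ≤ ℓ i) :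
    ∃ C : ℝ, 0 < C ∧ ∀ N : ℕ, 1 ≤ N → ∀ A : Set ℤ, LFree (m + 2) ℓ A →
      ∑ j ∈ Finset.Icc 1 N,
          ((A ∩ Set.Ioc (((j : ℤ) - 1) * N) ((j : ℤ) * N)).ncard : ℝ)
            ^ (∏ i : Fin (m + 1), ℓ i.castSucc)
        ≤ C * (N : ℝ) ^ ((∏ i : Fin (m + 1), ℓ i.castSucc) - 1) := by
  obtain ⟨C, hC⟩ := exists_sum_ncard_block_pow_le (m + 1) ℓ hℓ
  refine ⟨C + 1, by positivity, fun N _ A hA => ?_⟩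
  calc _ ≤ (C : ℝ) * N ^ ((∏ i : Fin (m + 1), ℓ i.castSucc) - 1) := mod_cast hC N A hA
    _ ≤ (C + 1) * N ^ ((∏ i : Fin (m + 1), ℓ i.castSucc) - 1) := by gcongr; linarith

/-- there is a constant `C` depending only on `r` and `ℓ₁,…,ℓ_r`
(here the number of summands is `m + 2 ≥ 2`) such that for every `N ≥ 1` and every
`L^{(r)}_{ℓ₁,…,ℓ_r}`-free set `A` of integers, with `A_j = A ∩ ((j−1)N, jN]`,
`Σ_{j ≤ N} |A_j|^{ℓ₁⋯ℓ_{r−1}} ≤ C · N^{ℓ₁⋯ℓ_{r−1} − 1}`. -/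
theorem stmt17 (m : ℕ) (ℓ : Fin (m + 2) → ℕ) (hℓ : ∀ i, 2 ≤ ℓ i) (hmono : Monotone ℓ) :
    ∃ C : ℝ, 0 < C ∧ ∀ N : ℕ, 1 ≤ N → ∀ A : Set ℤ, LFree (m + 2) ℓ A →
      ∑ j ∈ Finset.Icc 1 N,
          ((A ∩ Set.Ioc (((j : ℤ) - 1) * N) ((j : ℤ) * N)).ncard : ℝ)
            ^ (∏ i : Fin (m + 1), ℓ i.castSucc)
        ≤ C * (N : ℝ) ^ ((∏ i : Fin (m + 1), ℓ i.castSucc) - 1) :=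
  stmt17_general m ℓ hℓ
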